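/- Let E be real. If u ∈ ℂ^{2m} is nonzero, z ∈ ℂ is nonzero, and T(E)·u = z·u, then 1/z̄ (the inverse of the complex conjugate of z) is also an eigenvalue of T(E); moreover, if in addition |z| ≠ 1, then u†·Σ_n·u = 0. -/

import Mathlib

open Matrix

noncomputable def tstep {m : ℕ} (A B C : Matrix (Fin m) (Fin m) ℂ) (E : ℂ) :
    Matrix (Fin m ⊕ Fin m) (Fin m ⊕ Fin m) ℂ :=
  Matrix.fromBlocks (B⁻¹ * (E • 1 - A)) (-(B⁻¹ * C)) 1 0

/-- The transfer matrix `T(E) = t_n(E) ⋯ t_1(E)` (0-indexed: `t_{n-1} ⋯ t_0`). -/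
noncomputable def transfer {n m : ℕ} (A B C : Fin n → Matrix (Fin m) (Fin m) ℂ) (E : ℂ) :
    Matrix (Fin m ⊕ Fin m) (Fin m ⊕ Fin m) ℂ :=
  ((List.ofFn fun k : Fin n => tstep (A k) (B k) (C k) E).reverse).prod

/-- For the Hermitian chain: `C_k = B_{k-1}ᴴ` for `k = 2,…,n` and `C_1 = B_nᴴ`
(indices cyclically shifted, `0`-indexed). -/
noncomputable def hermC {n m : ℕ} (hn : 0 < n) (B : Fin n → Matrix (Fin m) (Fin m) ℂ) :
    Fin n → Matrix (Fin m) (Fin m) ℂ :=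
  fun k => (B ⟨((k : ℕ) + (n - 1)) % n, Nat.mod_lt _ hn⟩)ᴴ

/-- The symplectic form `Σ_n = i·[[0, -B_nᴴ],[B_n, 0]]`. -/
noncomputable def SigmaN {n m : ℕ} (hn : 0 < n) (B : Fin n → Matrix (Fin m) (Fin m) ℂ) :
    Matrix (Fin m ⊕ Fin m) (Fin m ⊕ Fin m) ℂ :=
  Complex.I • Matrix.fromBlocks 0 (-(B ⟨n - 1, by omega⟩)ᴴ) (B ⟨n - 1, by omega⟩) 0

/-!
Each step is `Σ`-unitary up to a shift of the block: for real `E` and Hermitian `A_k`,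
`t_kᴴ Σ(B_k) t_k = Σ(C_kᴴ) = Σ(B_{k-1})`, so the product telescopes and, since the chain closes
up cyclically (`C_1 = B_nᴴ`), `Tᴴ Σ_n T = Σ_n`. If `T u = z u`, then
`Tᴴ (Σ_n u) = z⁻¹ Σ_n u` with `Σ_n u ≠ 0`, so `z⁻¹` is an eigenvalue of `Tᴴ` and `z̄⁻¹` one of
`T`; and `u† Σ_n u = u† Tᴴ Σ_n T u = |z|² u† Σ_n u`, which forces `u† Σ_n u = 0` when `|z| ≠ 1`.
-/

/-- `SigmaN hn B` is `sigmaForm` of the last block `B ⟨n - 1, _⟩`. -/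
noncomputable def sigmaForm {m : ℕ} (M : Matrix (Fin m) (Fin m) ℂ) :
    Matrix (Fin m ⊕ Fin m) (Fin m ⊕ Fin m) ℂ :=
  Complex.I • Matrix.fromBlocks 0 (-Mᴴ) M 0

theorem isUnit_sigmaForm {m : ℕ} {M : Matrix (Fin m) (Fin m) ℂ} (hM : IsUnit M) :
    IsUnit (sigmaForm M) := by
  have hMd : IsUnit M.det := (Matrix.isUnit_iff_isUnit_det M).mp hM
  have hMHd : IsUnit Mᴴ.det := by rw [det_conjTranspose]; exact hMd.star
  rw [isUnit_iff_isUnit_det]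
  refine isUnit_det_of_left_inverse (B := (-Complex.I) • fromBlocks 0 M⁻¹ (-Mᴴ⁻¹) 0) ?_
  rw [sigmaForm, Matrix.smul_mul, Matrix.mul_smul, smul_smul, fromBlocks_multiply]
  simp only [Matrix.mul_zero, Matrix.zero_mul, Matrix.mul_neg, neg_neg, neg_zero, add_zero,
    zero_add, Matrix.nonsing_inv_mul _ hMd, Matrix.nonsing_inv_mul _ hMHd, fromBlocks_one,
    neg_mul, Complex.I_mul_I, one_smul]

theorem conjTranspose_tstep_mul_sigmaForm_mul_tstep {m : ℕ} {A B : Matrix (Fin m) (Fin m) ℂ}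
    (C : Matrix (Fin m) (Fin m) ℂ) {E : ℂ} (hE : star E = E) (hA : A.IsHermitian)
    (hB : IsUnit B) :
    (tstep A B C E)ᴴ * sigmaForm B * tstep A B C E = sigmaForm Cᴴ := by
  have hBd : IsUnit B.det := (Matrix.isUnit_iff_isUnit_det B).mp hB
  have hBHd : IsUnit Bᴴ.det := by rw [det_conjTranspose]; exact hBd.star
  have hEA : (E • (1 : Matrix (Fin m) (Fin m) ℂ) - A)ᴴ = E • 1 - A := by
    rw [conjTranspose_sub, conjTranspose_smul, hA.eq, conjTranspose_one, hE]
  rw [tstep, sigmaForm, sigmaForm, Matrix.mul_smul, Matrix.smul_mul, fromBlocks_conjTranspose,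
    fromBlocks_multiply, fromBlocks_multiply]
  congr 1
  simp only [conjTranspose_neg, conjTranspose_mul, conjTranspose_nonsing_inv, hEA,
    conjTranspose_one, conjTranspose_zero, Matrix.mul_zero, Matrix.zero_mul, Matrix.mul_one,
    Matrix.one_mul, Matrix.mul_neg, Matrix.neg_mul, neg_neg, neg_zero, add_zero, zero_add,
    add_neg_cancel, Matrix.mul_nonsing_inv_cancel_left _ _ hBd,
    Matrix.nonsing_inv_mul_cancel_right _ _ hBHd, conjTranspose_conjTranspose]

theorem star_prod_reverse_ofFn_mul_mul {R : Type*} [Monoid R] [StarMul R] :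
    ∀ {n : ℕ} (f : Fin n → R) (g : ℕ → R),
      (∀ i : Fin n, star (f i) * g (i + 1) * f i = g i) →
      star (List.ofFn f).reverse.prod * g n * (List.ofFn f).reverse.prod = g 0
  | 0, _, _, _ => by simp
  | n + 1, f, g, h => by
    rw [List.ofFn_succ', List.concat_eq_append, List.reverse_concat', List.prod_cons, star_mul]
    set P := (List.ofFn fun i => f i.castSucc).reverse.prod
    calc star P * star (f (Fin.last n)) * g (n + 1) * (f (Fin.last n) * P)
        = star P * (star (f (Fin.last n)) * g (n + 1) * f (Fin.last n)) * P := by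
          simp only [mul_assoc]
      _ = g 0 := by
        rw [show star (f (Fin.last n)) * g (n + 1) * f (Fin.last n) = g n from h (Fin.last n)]
        exact star_prod_reverse_ofFn_mul_mul _ g fun i => h i.castSucc

theorem conjTranspose_transfer_mul_SigmaN_mul_transfer {n m : ℕ} (hn : 0 < n)
    (A B : Fin n → Matrix (Fin m) (Fin m) ℂ) (hA : ∀ k, (A k).IsHermitian)
    (hB : ∀ k, IsUnit (B k)) (E : ℝ) :
    (transfer A B (hermC hn B) E)ᴴ * SigmaN hn B * transfer A B (hermC hn B) E = SigmaN hn B := by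
  -- `g j` is the form at site `j - 1`, read cyclically.
  let g : ℕ → Matrix (Fin m ⊕ Fin m) (Fin m ⊕ Fin m) ℂ :=
    fun j => sigmaForm (B ⟨(j + (n - 1)) % n, Nat.mod_lt _ hn⟩)
  have hg : ∀ j (hj : j < n), g (j + 1) = sigmaForm (B ⟨j, hj⟩) := fun j hj => by
    simp only [g, show j + 1 + (n - 1) = j + n by omega, Nat.add_mod_right, Nat.mod_eq_of_lt hj]
  have hg₀ : g 0 = SigmaN hn B := by
    simp only [g, zero_add, Nat.mod_eq_of_lt (Nat.sub_lt hn one_pos)]; rfl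
  have hgn : g n = SigmaN hn B := by
    have := hg (n - 1) (Nat.sub_lt hn one_pos)
    rwa [Nat.sub_one_add_one hn.ne'] at this
  suffices star (transfer A B (hermC hn B) E) * g n * transfer A B (hermC hn B) E = g 0 by
    rwa [hgn, hg₀, star_eq_conjTranspose] at this
  refine star_prod_reverse_ofFn_mul_mul _ g fun i => ?_
  rw [hg i i.isLt, star_eq_conjTranspose,
    conjTranspose_tstep_mul_sigmaForm_mul_tstep _ (Complex.conj_ofReal E) (hA i) (hB i)]
  simp only [hermC, conjTranspose_conjTranspose, g]

section SigmaUnitary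

variable {ι : Type*} [Fintype ι] {T S : Matrix ι ι ℂ} {u : ι → ℂ} {z : ℂ}

theorem det_sub_smul_one_eq_zero_of_mulVec_eq_smul [DecidableEq ι] {M : Matrix ι ι ℂ}
    {v : ι → ℂ} {c : ℂ} (hv : v ≠ 0) (hMv : M *ᵥ v = c • v) : (M - c • 1).det = 0 :=
  exists_mulVec_eq_zero_iff.mp
    ⟨v, hv, by rw [sub_mulVec, smul_mulVec, one_mulVec, hMv, sub_self]⟩

theorem conjTranspose_mulVec_mulVec_eq_inv_smul (hTS : Tᴴ * S * T = S)
    (hz : z ≠ 0) (huz : T *ᵥ u = z • u) : Tᴴ *ᵥ (S *ᵥ u) = z⁻¹ • (S *ᵥ u) := by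
  rw [eq_inv_smul_iff₀ hz, ← mulVec_smul, ← mulVec_smul, ← huz, mulVec_mulVec, mulVec_mulVec, hTS]

theorem det_sub_inv_conj_smul_one_eq_zero [DecidableEq ι] (hTS : Tᴴ * S * T = S) (hS : IsUnit S)
    (hu : u ≠ 0) (hz : z ≠ 0) (huz : T *ᵥ u = z • u) :
    (T - (starRingEnd ℂ z)⁻¹ • 1).det = 0 := by
  have hSu : S *ᵥ u ≠ 0 := fun h0 =>
    hu ((mulVec_injective_iff_isUnit.mpr hS) (h0.trans (mulVec_zero S).symm))
  have hdet : (Tᴴ - z⁻¹ • 1).det = 0 := det_sub_smul_one_eq_zero_of_mulVec_eq_smul hSu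
    (conjTranspose_mulVec_mulVec_eq_inv_smul hTS hz huz)
  have hct : (Tᴴ - z⁻¹ • 1)ᴴ = T - (starRingEnd ℂ z)⁻¹ • 1 := by
    rw [conjTranspose_sub, conjTranspose_conjTranspose, conjTranspose_smul, conjTranspose_one,
      star_inv₀]
    rfl
  rw [← hct, det_conjTranspose, hdet, star_zero]

theorem dotProduct_conjTranspose_mul_mul_mulVec_of_mulVec_eq_smul (huz : T *ᵥ u = z • u) :
    star u ⬝ᵥ ((Tᴴ * S * T) *ᵥ u) = (‖z‖ ^ 2 : ℂ) * (star u ⬝ᵥ (S *ᵥ u)) := by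
  rw [← mulVec_mulVec, ← mulVec_mulVec, huz, mulVec_smul, mulVec_smul, dotProduct_smul,
    dotProduct_mulVec (star u) Tᴴ, ← star_mulVec, huz, star_smul, smul_dotProduct, smul_smul,
    smul_eq_mul, ← Complex.conj_mul', Complex.star_def, mul_comm z]

theorem dotProduct_mulVec_eq_zero_of_norm_ne_one (hTS : Tᴴ * S * T = S)
    (huz : T *ᵥ u = z • u) (hz : ‖z‖ ≠ 1) : star u ⬝ᵥ (S *ᵥ u) = 0 := by
  have hscale := dotProduct_conjTranspose_mul_mul_mulVec_of_mulVec_eq_smul (S := S) huz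
  rw [hTS] at hscale
  have hz2 : (‖z‖ ^ 2 : ℂ) - 1 ≠ 0 := by
    rw [sub_ne_zero]
    exact_mod_cast fun h => hz ((pow_eq_one_iff_of_nonneg (norm_nonneg z) two_ne_zero).mp h)
  exact (mul_eq_zero.mp (by linear_combination -hscale)).resolve_left hz2

end SigmaUnitary

/-- For real `E`, eigenvalues of `T(E)` come in pairs `z`, `1/z̄`; moreover if
`|z| ≠ 1` then the eigenvector is isotropic for `Σ_n`. -/
theorem stmt17 {n m : ℕ} (hn : 2 ≤ n)
    (A B : Fin n → Matrix (Fin m) (Fin m) ℂ)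
    (hA : ∀ k, (A k).IsHermitian) (hB : ∀ k, IsUnit (B k)) (E : ℝ)
    (u : Fin m ⊕ Fin m → ℂ) (hu : u ≠ 0) (z : ℂ) (hz : z ≠ 0)
    (huz : transfer A B (hermC (by omega) B) (E : ℂ) *ᵥ u = z • u) :
    (transfer A B (hermC (by omega : 0 < n) B) (E : ℂ) -
        ((starRingEnd ℂ z)⁻¹) • 1).det = 0 ∧
    (‖z‖ ≠ 1 →
      dotProduct (star u) (SigmaN (by omega : 0 < n) B *ᵥ u) = 0) := by
  have hTS := conjTranspose_transfer_mul_SigmaN_mul_transfer (by omega) A B hA hB E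
  have hS : IsUnit (SigmaN (by omega : 0 < n) B) := isUnit_sigmaForm (hB _)
  exact ⟨det_sub_inv_conj_smul_one_eq_zero hTS hS hu hz huz,
    dotProduct_mulVec_eq_zero_of_norm_ne_one hTS huz⟩
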